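/- arXiv:2211.00287 — 2 statements merged into one kernel-verified Lean document; each statement's English description precedes it below -/
import Mathlib

section
/- Let λ > 0 and let f : ℝ → ℝ be continuously differentiable with liminf_{|u|→∞} f'(u) > −λ. Define F(u) = ∫₀ᵘ f(τ) dτ. Then there exist constants μ ∈ [0, λ) and C ≥ 0 such that F(u) ≥ −(μ/2)u² − C for all u ∈ ℝ. -/
/-!
Choose `μ < λ` strictly above `-liminf f'`, and let `G(u) = F(u) + (μ/2)u²`. Then
`G'' = f' + μ` is bounded below by a positive constant outside a compact set, so `G'` tends
to `±∞` at `±∞` and hence `G` tends to `+∞` at both ends. A continuous function that is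
coercive in this sense attains a global minimum, which gives the constant `C`.
-/

open Filter

section GrowthFromDeriv

variable {f : ℝ → ℝ} {c : ℝ}

theorem tendsto_atTop_atTop_of_eventually_le_deriv (hf : Differentiable ℝ f) (hc : 0 < c)
    (h : ∀ᶠ x in atTop, c ≤ deriv f x) : Tendsto f atTop atTop := by
  obtain ⟨R, hR⟩ := eventually_atTop.1 h
  have hlinear : ∀ x ≥ R, f R + c * (x - R) ≤ f x := fun x hx => by
    have := (convex_Ici R).mul_sub_le_image_sub_of_le_deriv hf.continuous.continuousOn
      hf.differentiableOn (fun y hy => hR y (interior_subset hy)) R Set.self_mem_Ici x hx hx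
    linarith
  refine tendsto_atTop_mono' atTop (eventually_atTop.2 ⟨R, hlinear⟩) ?_
  exact tendsto_atTop_add_const_left _ _
    ((tendsto_atTop_add_const_right _ _ tendsto_id).const_mul_atTop hc)

theorem tendsto_atBot_atTop_of_eventually_deriv_le (hf : Differentiable ℝ f) (hc : c < 0)
    (h : ∀ᶠ x in atBot, deriv f x ≤ c) : Tendsto f atBot atTop := by
  have hreflect : Tendsto (fun x => f (-x)) atTop atTop := by
    refine tendsto_atTop_atTop_of_eventually_le_deriv (hf.comp differentiable_neg)
      (neg_pos.2 hc) ((tendsto_neg_atTop_atBot.eventually h).mono fun x hx => ?_)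
    rw [deriv_comp_neg]
    linarith
  simpa [Function.comp_def] using hreflect.comp tendsto_neg_atBot_atTop

theorem tendsto_atBot_atBot_of_eventually_le_deriv (hf : Differentiable ℝ f) (hc : 0 < c)
    (h : ∀ᶠ x in atBot, c ≤ deriv f x) : Tendsto f atBot atBot := by
  have hneg : Tendsto (-f) atBot atTop := by
    refine tendsto_atBot_atTop_of_eventually_deriv_le hf.neg (neg_lt_zero.2 hc)
      (h.mono fun x hx => ?_)
    rw [deriv.neg']
    linarith
  exact tendsto_neg_atTop_iff.1 hneg

theorem tendsto_cocompact_atTop_of_hasDerivAt_of_le_deriv {G : ℝ → ℝ}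
    (hG : ∀ x, HasDerivAt G (f x) x) (hf : Differentiable ℝ f) (hc : 0 < c)
    (h : ∀ᶠ x in cocompact ℝ, c ≤ deriv f x) : Tendsto G (cocompact ℝ) atTop := by
  have hGdiff : Differentiable ℝ G := fun x => (hG x).differentiableAt
  have hderiv : deriv G = f := funext fun x => (hG x).deriv
  rw [cocompact_eq_atBot_atTop] at h ⊢
  refine tendsto_sup.2 ⟨?_, ?_⟩
  · have hf_atBot := tendsto_atBot_atBot_of_eventually_le_deriv hf hc (h.filter_mono le_sup_left)
    refine tendsto_atBot_atTop_of_eventually_deriv_le hGdiff neg_one_lt_zero ?_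
    simpa only [hderiv] using hf_atBot.eventually (eventually_le_atBot (-1))
  · have hf_atTop := tendsto_atTop_atTop_of_eventually_le_deriv hf hc (h.filter_mono le_sup_right)
    refine tendsto_atTop_atTop_of_eventually_le_deriv hGdiff one_pos ?_
    simpa only [hderiv] using hf_atTop.eventually (eventually_ge_atTop 1)

end GrowthFromDeriv

/-- Inequality (3.4) of the paper (pointwise form): if `liminf_{|u|→∞} f'(u) > -λ`
and `F(u) = ∫₀ᵘ f`, then `F(u) ≥ -(μ/2)u² - C` for some `μ ∈ [0, λ)` and `C ≥ 0`. -/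
theorem primitive_lower_bound_of_liminf_deriv
    (lam : ℝ) (hlam : 0 < lam) (f : ℝ → ℝ) (hf : ContDiff ℝ 1 f)
    (hliminf : ((-lam : ℝ) : EReal) <
      Filter.liminf (fun u : ℝ => ((deriv f u : ℝ) : EReal)) (Filter.cocompact ℝ)) :
    ∃ μ C : ℝ, 0 ≤ μ ∧ μ < lam ∧ 0 ≤ C ∧
      ∀ u : ℝ, (∫ τ in (0:ℝ)..u, f τ) ≥ -(μ / 2) * u ^ 2 - C := by
  have hfdiff : Differentiable ℝ f := hf.differentiable one_ne_zero
  obtain ⟨z, hlam_z, hz⟩ := EReal.exists_between_coe_real hliminf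
  have hlam_z : -lam < z := EReal.coe_lt_coe_iff.1 hlam_z
  have hz_deriv : ∀ᶠ u in cocompact ℝ, z < deriv f u :=
    (eventually_lt_of_lt_liminf hz).mono fun u hu => EReal.coe_lt_coe_iff.1 hu
  set μ := max 0 ((lam - z) / 2)
  have hμ_z : (lam - z) / 2 ≤ μ := le_max_right _ _
  set G := fun u => (∫ τ in (0:ℝ)..u, f τ) + μ / 2 * u ^ 2
  have hG : ∀ u, HasDerivAt G (f u + μ * u) u := fun u => by
    refine ((hfdiff.continuous.integral_hasStrictDerivAt 0 u).hasDerivAt.add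
      ((hasDerivAt_pow 2 u).const_mul (μ / 2))).congr_deriv ?_
    norm_num
    ring
  have hG_deriv_deriv : ∀ u, deriv (fun v => f v + μ * v) u = deriv f u + μ := fun u =>
    ((hfdiff u).hasDerivAt.add ((hasDerivAt_id u).const_mul μ)).deriv.trans (by simp)
  have hG_coercive : Tendsto G (cocompact ℝ) atTop := by
    refine tendsto_cocompact_atTop_of_hasDerivAt_of_le_deriv hG
      (hfdiff.add (differentiable_id.const_mul μ)) (c := μ + z) (by linarith)
      (hz_deriv.mono fun u hu => ?_)
    rw [hG_deriv_deriv]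
    linarith
  have hG_cont : Continuous G := continuous_iff_continuousAt.2 fun u => (hG u).continuousAt
  obtain ⟨u₀, hu₀⟩ := hG_cont.exists_forall_le hG_coercive
  refine ⟨μ, max 0 (-G u₀), le_max_left _ _, max_lt hlam (by linarith), le_max_left _ _,
    fun u => ?_⟩
  have hmin : G u₀ ≤ (∫ τ in (0:ℝ)..u, f τ) + μ / 2 * u ^ 2 := hu₀ u
  linarith [le_max_right 0 (-G u₀)]
end

section
/- Let λ > 0 and let f : ℝ → ℝ be continuously differentiable with liminf_{|u|→∞} f'(u) > −λ. Define F(u) = ∫₀ᵘ f(τ) dτ. Then there exist constants μ ∈ [0, λ) and C ≥ 0 such that f(u)·u ≥ F(u) − (μ/2)u² − C for all u ∈ ℝ. -/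
/-!
Put `g(u) = f(u) u + (μ/2) u² - ∫₀ᵘ f`, so that `g'(u) = (f'(u) + μ) u`. Choosing `μ ∈ [0, λ)` with
`f' ≥ -μ` outside a compact interval `[-R, R]`, `g` is antitone on `(-∞, -R]` and monotone on
`[R, ∞)`; being continuous on `[-R, R]`, it is bounded below on all of `ℝ`.
-/

open Filter Set

theorem EReal.exists_real_lt_eventually_lt_of_lt_liminf {α : Type*} {l : Filter α} {g : α → ℝ}
    {a : ℝ} (h : (a : EReal) < liminf (fun x => (g x : EReal)) l) :
    ∃ c : ℝ, a < c ∧ ∀ᶠ x in l, c < g x := by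
  obtain ⟨c, hac, hc⟩ := EReal.lt_iff_exists_real_btwn.1 h
  exact ⟨c, EReal.coe_lt_coe_iff.1 hac,
    (eventually_lt_of_lt_liminf hc).mono fun _ => EReal.coe_lt_coe_iff.1⟩

theorem bddBelow_range_of_antitoneOn_of_monotoneOn {α β : Type*} [LinearOrder α]
    [TopologicalSpace α] [CompactIccSpace α] [LinearOrder β] [TopologicalSpace β]
    [ClosedIicTopology β] [Nonempty β] {g : α → β} {a b : α} (hanti : AntitoneOn g (Iic a))
    (hcont : ContinuousOn g (Icc a b)) (hmono : MonotoneOn g (Ici b)) : BddBelow (range g) := by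
  have hleft : BddBelow (g '' Iic a) :=
    ⟨g a, forall_mem_image.2 fun _ hu => hanti hu self_mem_Iic hu⟩
  have hright : BddBelow (g '' Ici b) :=
    ⟨g b, forall_mem_image.2 fun _ hu => hmono self_mem_Ici hu hu⟩
  refine ((hleft.union (isCompact_Icc.bddBelow_image hcont)).union hright).mono ?_
  rintro _ ⟨u, rfl⟩
  rcases le_total u a with hua | hau
  · exact .inl (.inl (mem_image_of_mem g hua))
  rcases le_total u b with hub | hbu
  · exact .inl (.inr (mem_image_of_mem g ⟨hau, hub⟩))
  · exact .inr (mem_image_of_mem g hbu)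

section DissipativityGap

variable {f : ℝ → ℝ} {μ : ℝ}

noncomputable def dissipativityGap (f : ℝ → ℝ) (μ u : ℝ) : ℝ :=
  f u * u + μ / 2 * u ^ 2 - ∫ τ in (0 : ℝ)..u, f τ

theorem hasDerivAt_dissipativityGap (hf : Differentiable ℝ f) (u : ℝ) :
    HasDerivAt (dissipativityGap f μ) ((deriv f u + μ) * u) u := by
  have hprod : HasDerivAt (fun u => f u * u) (deriv f u * u + f u * 1) u :=
    (hf u).hasDerivAt.mul (hasDerivAt_id u)
  have hsq : HasDerivAt (fun u : ℝ => μ / 2 * u ^ 2) (μ / 2 * (2 * u ^ 1)) u :=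
    (hasDerivAt_pow 2 u).const_mul (μ / 2)
  have hprim := (hf.continuous.integral_hasStrictDerivAt 0 u).hasDerivAt
  exact ((hprod.add hsq).sub hprim).congr_deriv (by ring)

theorem continuous_dissipativityGap (hf : Differentiable ℝ f) :
    Continuous (dissipativityGap f μ) :=
  continuous_iff_continuousAt.2 fun u => (hasDerivAt_dissipativityGap hf u).continuousAt

theorem monotoneOn_dissipativityGap (hf : Differentiable ℝ f) {b : ℝ} (hb : 0 ≤ b)
    (hderiv : ∀ u, b ≤ u → -μ ≤ deriv f u) : MonotoneOn (dissipativityGap f μ) (Ici b) := by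
  refine monotoneOn_of_hasDerivWithinAt_nonneg (convex_Ici b)
    (continuous_dissipativityGap hf).continuousOn
    (fun u _ => (hasDerivAt_dissipativityGap hf u).hasDerivWithinAt) fun u hu => ?_
  rw [interior_Ici] at hu
  exact mul_nonneg (by linarith [hderiv u hu.le]) (hb.trans hu.le)

theorem antitoneOn_dissipativityGap (hf : Differentiable ℝ f) {a : ℝ} (ha : a ≤ 0)
    (hderiv : ∀ u, u ≤ a → -μ ≤ deriv f u) : AntitoneOn (dissipativityGap f μ) (Iic a) := by
  refine antitoneOn_of_hasDerivWithinAt_nonpos (convex_Iic a)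
    (continuous_dissipativityGap hf).continuousOn
    (fun u _ => (hasDerivAt_dissipativityGap hf u).hasDerivWithinAt) fun u hu => ?_
  rw [interior_Iic] at hu
  exact mul_nonpos_of_nonneg_of_nonpos (by linarith [hderiv u hu.le]) (hu.le.trans ha)

theorem bddBelow_range_dissipativityGap (hf : Differentiable ℝ f) {R : ℝ}
    (hderiv : ∀ u, R ≤ |u| → -μ ≤ deriv f u) : BddBelow (range (dissipativityGap f μ)) := by
  refine bddBelow_range_of_antitoneOn_of_monotoneOn
    (antitoneOn_dissipativityGap hf (neg_nonpos.2 (abs_nonneg R)) fun u hu => hderiv u ?_)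
    (continuous_dissipativityGap hf).continuousOn
    (monotoneOn_dissipativityGap hf (abs_nonneg R) fun u hu => hderiv u ?_)
  · exact (le_abs_self R).trans (le_neg_of_le_neg hu |>.trans (neg_le_abs u))
  · exact (le_abs_self R).trans (hu.trans (le_abs_self u))

end DissipativityGap

/-- Inequality (3.5) of the paper (pointwise form): if `liminf_{|u|→∞} f'(u) > -λ`
and `F(u) = ∫₀ᵘ f`, then `f(u)·u ≥ F(u) - (μ/2)u² - C` for some `μ ∈ [0, λ)` and `C ≥ 0`. -/
theorem dissipativity_bound_of_liminf_deriv
    (lam : ℝ) (hlam : 0 < lam) (f : ℝ → ℝ) (hf : ContDiff ℝ 1 f)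
    (hliminf : ((-lam : ℝ) : EReal) <
      Filter.liminf (fun u : ℝ => ((deriv f u : ℝ) : EReal)) (Filter.cocompact ℝ)) :
    ∃ μ C : ℝ, 0 ≤ μ ∧ μ < lam ∧ 0 ≤ C ∧
      ∀ u : ℝ, f u * u ≥ (∫ τ in (0:ℝ)..u, f τ) - (μ / 2) * u ^ 2 - C := by
  obtain ⟨c, hlamc, hev⟩ := EReal.exists_real_lt_eventually_lt_of_lt_liminf hliminf
  rw [← Metric.cobounded_eq_cocompact] at hev
  obtain ⟨R, -, hR⟩ := hasBasis_cobounded_norm.eventually_iff.1 hev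
  set μ := max 0 (-c)
  have hderiv : ∀ u, R ≤ |u| → -μ ≤ deriv f u := fun u hu => by
    linarith [le_max_right 0 (-c), hR (x := u) hu]
  obtain ⟨m, hm⟩ := bddBelow_range_dissipativityGap (hf.differentiable one_ne_zero) hderiv
  refine ⟨μ, max 0 (-m), le_max_left _ _, max_lt hlam (by linarith), le_max_left _ _,
    fun u => ?_⟩
  have hgap : m ≤ dissipativityGap f μ u := hm (mem_range_self u)
  unfold dissipativityGap at hgap
  linarith [le_max_right 0 (-m)]
end
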